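/- arXiv:2206.09982 — 3 statements merged into one kernel-verified Lean document; each statement's English description precedes it below -/
import Mathlib

section
/- Almost-sure uniform negligibility of the truncation (Proposition 4.1, stated in the coefficient framework the proof uses): Let (Ω,𝔉,P) be a probability space and (X_t)_{t∈ℤ} real-valued random variables with sup_{t∈ℤ} E|X_t| < ∞. Let Θ be a compact subset of ℝ^m, d₁ > 0 and K > 0, and let γ_j : Θ → ℝ (j ≥ 0) satisfy sup_{θ∈Θ} |γ_j(θ)| ≤ K j^{−1−d₁} for all j ≥ 1. Then, almost surely, for every t ≥ 1 and every θ ∈ Θ the series ε_t(θ) = Σ_{j≥0} γ_j(θ) X_{t−j} converges absolutely, and sup_{θ∈Θ} |ε_t(θ) − ε̃_t(θ)| = sup_{θ∈Θ} |Σ_{j≥t} γ_j(θ) X_{t−j}| converges to 0 as t → ∞, almost surely. -/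
open MeasureTheory ProbabilityTheory Filter

private lemma aux_ae_summable {Ω : Type*} [MeasureSpace Ω] [IsProbabilityMeasure (ℙ : Measure Ω)]
    (f : ℕ → Ω → ℝ) (hint : ∀ j, Integrable (f j) ℙ) (b : ℕ → ℝ) (hb : Summable b)
    (hle : ∀ j, ∫ ω, |f j ω| ∂ℙ ≤ b j) :
    ∀ᵐ ω ∂ℙ, Summable fun j => |f j ω| := by
  have hmeas : ∀ j, AEMeasurable (fun ω => (‖f j ω‖₊ : ENNReal)) ℙ :=
    fun j => (hint j).aestronglyMeasurable.enorm
  have key : ∫⁻ ω, ∑' j, (‖f j ω‖₊ : ENNReal) ∂ℙ < ⊤ := by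
    rw [lintegral_tsum hmeas]
    have h1 : ∀ j, ∫⁻ ω, (‖f j ω‖₊ : ENNReal) ∂ℙ = ENNReal.ofReal (∫ ω, ‖f j ω‖ ∂ℙ) :=
      fun j => (ofReal_integral_norm_eq_lintegral_enorm (hint j)).symm
    calc ∑' j, ∫⁻ ω, (‖f j ω‖₊ : ENNReal) ∂ℙ
        ≤ ∑' j, ENNReal.ofReal (b j) := by
          refine ENNReal.tsum_le_tsum fun j => ?_
          rw [h1 j]
          exact ENNReal.ofReal_le_ofReal (by simpa [Real.norm_eq_abs] using hle j)
      _ = ENNReal.ofReal (∑' j, b j) := by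
          rw [ENNReal.ofReal_tsum_of_nonneg (fun j => le_trans (by positivity) (hle j)) hb]
      _ < ⊤ := ENNReal.ofReal_lt_top
  have := ae_lt_top' (AEMeasurable.ennreal_tsum hmeas) key.ne
  filter_upwards [this] with ω hω
  have hsum : Summable fun j => ‖f j ω‖₊ := ENNReal.tsum_coe_ne_top_iff_summable.1 hω.ne
  have := (NNReal.summable_coe).2 hsum
  simpa [Real.norm_eq_abs] using this

set_option maxHeartbeats 1600000 in
/-- Almost-sure uniform negligibility of the truncation: if `sup_t E|X_t| < ∞`,
`Θ ⊂ ℝ^m` is compact and `sup_{θ∈Θ} |γ_j(θ)| ≤ K j^{−1−d₁}` for `j ≥ 1`, then almost surely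
the series `ε_t(θ) = Σ_{j≥0} γ_j(θ) X_{t−j}` converges absolutely for every `t ≥ 1`, `θ ∈ Θ`,
and `sup_{θ∈Θ} |ε_t(θ) − ε̃_t(θ)| = sup_{θ∈Θ} |Σ_{j≥t} γ_j(θ) X_{t−j}|
= sup_{θ∈Θ} |Σ_{j≥0} γ_{t+j}(θ) X_{−j}| → 0` as `t → ∞`. -/
theorem truncation_negligible_as
    {Ω : Type*} [MeasureSpace Ω] [IsProbabilityMeasure (ℙ : Measure Ω)]
    {m : ℕ} (Θ : Set (Fin m → ℝ)) (hΘ : IsCompact Θ)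
    (X : ℤ → Ω → ℝ) (hXint : ∀ t : ℤ, Integrable (X t) ℙ)
    (C : ℝ) (hXC : ∀ t : ℤ, ∫ ω, |X t ω| ∂ℙ ≤ C)
    (γ : ℕ → (Fin m → ℝ) → ℝ) (d₁ K : ℝ) (hd₁ : 0 < d₁) (hK : 0 < K)
    (hγ : ∀ j : ℕ, 1 ≤ j → ∀ θ ∈ Θ, |γ j θ| ≤ K * (j : ℝ) ^ (-(1 + d₁))) :
    ∀ᵐ ω ∂ℙ,
      (∀ t : ℤ, 1 ≤ t → ∀ θ ∈ Θ, Summable fun j : ℕ => |γ j θ * X (t - j) ω|) ∧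
      Tendsto (fun t : ℕ => ⨆ θ ∈ Θ, |∑' j : ℕ, γ (t + j) θ * X (-(j : ℤ)) ω|)
        atTop (nhds 0) := by
  have he1 : (1 : ℝ) < 1 + d₁ / 2 := by linarith
  have hC : 0 ≤ C := le_trans (by positivity) (hXC 0)
  -- summability of the coefficient bound
  have hce : Summable fun n : ℕ => (n : ℝ) ^ (-(1 + d₁ / 2)) := by
    rw [Real.summable_nat_rpow]; linarith
  have hce1 : Summable fun n : ℕ => ((n : ℝ) + 1) ^ (-(1 + d₁ / 2)) := by
    have := (summable_nat_add_iff 1).2 hce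
    simpa using this
  -- a.s. event 1 : for all t, Summable fun j => (j:ℝ)^(-(1 + d₁ / 2)) * |X (t-j) ω|
  have hA : ∀ᵐ ω ∂ℙ, ∀ t : ℤ, Summable fun j : ℕ => |(j : ℝ) ^ (-(1 + d₁ / 2)) * X (t - j) ω| := by
    rw [ae_all_iff]
    intro t
    refine aux_ae_summable (fun j ω => (j : ℝ) ^ (-(1 + d₁ / 2)) * X (t - j) ω)
      (fun j => ((hXint (t - j)).const_mul _)) (fun j => (j : ℝ) ^ (-(1 + d₁ / 2)) * C)
      (hce.mul_right C) (fun j => ?_)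
    have h0 : (0:ℝ) ≤ (j : ℝ) ^ (-(1 + d₁ / 2)) := Real.rpow_nonneg (Nat.cast_nonneg j) _
    calc ∫ ω, |(j : ℝ) ^ (-(1 + d₁ / 2)) * X (t - j) ω| ∂ℙ
        = (j : ℝ) ^ (-(1 + d₁ / 2)) * ∫ ω, |X (t - j) ω| ∂ℙ := by
          simp_rw [abs_mul, abs_of_nonneg h0]
          exact integral_const_mul _ _
      _ ≤ (j : ℝ) ^ (-(1 + d₁ / 2)) * C := by
          exact mul_le_mul_of_nonneg_left (hXC _) h0
  -- a.s. event 2 : Summable fun j => ((j:ℝ)+1)^(-(1 + d₁ / 2)) * |X (-j) ω|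
  have hB : ∀ᵐ ω ∂ℙ, Summable fun j : ℕ => ((j : ℝ) + 1) ^ (-(1 + d₁ / 2)) * |X (-(j : ℤ)) ω| := by
    have := aux_ae_summable (fun j ω => ((j : ℝ) + 1) ^ (-(1 + d₁ / 2)) * X (-(j : ℤ)) ω)
      (fun j => ((hXint _).const_mul _)) (fun j => ((j : ℝ) + 1) ^ (-(1 + d₁ / 2)) * C)
      (hce1.mul_right C) (fun j => ?_)
    · filter_upwards [this] with ω hω
      have h0 : ∀ j : ℕ, (0:ℝ) ≤ ((j : ℝ) + 1) ^ (-(1 + d₁ / 2)) := fun j => Real.rpow_nonneg (by positivity) _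
      refine hω.congr fun j => ?_
      rw [abs_mul, abs_of_nonneg (h0 j)]
    · have h0 : (0:ℝ) ≤ ((j : ℝ) + 1) ^ (-(1 + d₁ / 2)) := Real.rpow_nonneg (by positivity) _
      calc ∫ ω, |((j : ℝ) + 1) ^ (-(1 + d₁ / 2)) * X (-(j : ℤ)) ω| ∂ℙ
          = ((j : ℝ) + 1) ^ (-(1 + d₁ / 2)) * ∫ ω, |X (-(j : ℤ)) ω| ∂ℙ := by
            simp_rw [abs_mul, abs_of_nonneg h0]
            exact integral_const_mul _ _
        _ ≤ ((j : ℝ) + 1) ^ (-(1 + d₁ / 2)) * C := mul_le_mul_of_nonneg_left (hXC _) h0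
  filter_upwards [hA, hB] with ω hω1 hω2
  constructor
  · -- claim 1
    intro t _ht θ hθ
    refine (summable_nat_add_iff 1).mp ?_
    have hshift : Summable fun n : ℕ => |((n + 1 : ℕ) : ℝ) ^ (-(1 + d₁ / 2)) * X (t - (n + 1 : ℕ)) ω| :=
      (summable_nat_add_iff 1).mpr (hω1 t)
    refine Summable.of_nonneg_of_le (fun n => abs_nonneg _)
      (fun n => ?_) (hshift.mul_left K)
    have hb1 : (1:ℝ) ≤ ((n + 1 : ℕ) : ℝ) := by exact_mod_cast Nat.succ_le_succ (Nat.zero_le n)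
    have hγle : |γ (n + 1) θ| ≤ K * ((n + 1 : ℕ) : ℝ) ^ (-(1 + d₁ / 2)) := by
      refine le_trans (hγ (n + 1) (Nat.succ_le_succ (Nat.zero_le n)) θ hθ) ?_
      exact mul_le_mul_of_nonneg_left
        (Real.rpow_le_rpow_of_exponent_le hb1 (by linarith)) hK.le
    calc |γ (n + 1) θ * X (t - (n + 1 : ℕ)) ω|
        = |γ (n + 1) θ| * |X (t - (n + 1 : ℕ)) ω| := abs_mul _ _
      _ ≤ K * ((n + 1 : ℕ) : ℝ) ^ (-(1 + d₁ / 2)) * |X (t - (n + 1 : ℕ)) ω| :=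
          mul_le_mul_of_nonneg_right hγle (abs_nonneg _)
      _ = K * |((n + 1 : ℕ) : ℝ) ^ (-(1 + d₁ / 2)) * X (t - (n + 1 : ℕ)) ω| := by
          rw [abs_mul, abs_of_nonneg (Real.rpow_nonneg (Nat.cast_nonneg _) _)]
          ring
  · -- claim 2
    obtain ⟨Z, hZ⟩ : ∃ z : ℝ, z = ∑' j : ℕ, ((j : ℝ) + 1) ^ (-(1 + d₁ / 2)) * |X (-(j : ℤ)) ω| :=
      ⟨_, rfl⟩
    have hZ0 : 0 ≤ Z := hZ ▸ tsum_nonneg fun j => mul_nonneg (Real.rpow_nonneg (by positivity) _) (abs_nonneg _)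
    -- pointwise coefficient bound for t ≥ 1
    have hcoef : ∀ t : ℕ, 1 ≤ t → ∀ j : ℕ, ∀ θ ∈ Θ,
        |γ (t + j) θ| ≤ K * (t : ℝ) ^ (-(d₁ / 2)) * ((j : ℝ) + 1) ^ (-(1 + d₁ / 2)) := by
      intro t ht j θ hθ
      have htpos : (0:ℝ) < (t : ℝ) := by exact_mod_cast ht
      have htj : (0:ℝ) < ((t + j : ℕ) : ℝ) := by positivity
      have h1 : ((t + j : ℕ) : ℝ) ^ (-(1 + d₁))
          = ((t + j : ℕ) : ℝ) ^ (-(d₁ / 2)) * ((t + j : ℕ) : ℝ) ^ (-(1 + d₁ / 2)) := by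
        rw [← Real.rpow_add htj]; ring_nf
      have h2 : ((t + j : ℕ) : ℝ) ^ (-(d₁ / 2)) ≤ (t : ℝ) ^ (-(d₁ / 2)) :=
        Real.rpow_le_rpow_of_nonpos htpos (by exact_mod_cast Nat.le_add_right t j)
          (by linarith)
      have h3 : ((t + j : ℕ) : ℝ) ^ (-(1 + d₁ / 2)) ≤ ((j : ℝ) + 1) ^ (-(1 + d₁ / 2)) := by
        refine Real.rpow_le_rpow_of_nonpos (by positivity) ?_ (by linarith)
        push_cast
        have : (1:ℝ) ≤ (t:ℝ) := by exact_mod_cast ht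
        linarith
      calc |γ (t + j) θ| ≤ K * ((t + j : ℕ) : ℝ) ^ (-(1 + d₁)) :=
            hγ (t + j) (le_trans ht (Nat.le_add_right t j)) θ hθ
        _ = K * (((t + j : ℕ) : ℝ) ^ (-(d₁ / 2)) * ((t + j : ℕ) : ℝ) ^ (-(1 + d₁ / 2))) := by rw [h1]
        _ ≤ K * ((t : ℝ) ^ (-(d₁ / 2)) * ((j : ℝ) + 1) ^ (-(1 + d₁ / 2))) := by
            refine mul_le_mul_of_nonneg_left ?_ hK.le
            exact mul_le_mul h2 h3 (Real.rpow_nonneg htj.le _) (Real.rpow_nonneg htpos.le _)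
        _ = K * (t : ℝ) ^ (-(d₁ / 2)) * ((j : ℝ) + 1) ^ (-(1 + d₁ / 2)) := by ring
    -- term summability and tsum bound
    have hbound : ∀ t : ℕ, 1 ≤ t → ∀ θ ∈ Θ,
        |∑' j : ℕ, γ (t + j) θ * X (-(j : ℤ)) ω| ≤ K * (t : ℝ) ^ (-(d₁ / 2)) * Z := by
      intro t ht θ hθ
      have htpos : (0:ℝ) < (t : ℝ) := by exact_mod_cast ht
      have hKt : (0:ℝ) ≤ K * (t : ℝ) ^ (-(d₁ / 2)) :=
        mul_nonneg hK.le (Real.rpow_nonneg htpos.le _)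
      have hterm : ∀ j : ℕ, |γ (t + j) θ * X (-(j : ℤ)) ω|
          ≤ K * (t : ℝ) ^ (-(d₁ / 2)) * (((j : ℝ) + 1) ^ (-(1 + d₁ / 2)) * |X (-(j : ℤ)) ω|) := by
        intro j
        rw [abs_mul, ← mul_assoc]
        exact mul_le_mul_of_nonneg_right (hcoef t ht j θ hθ) (abs_nonneg _)
      have hsumabs : Summable fun j : ℕ => |γ (t + j) θ * X (-(j : ℤ)) ω| :=
        Summable.of_nonneg_of_le (fun j => abs_nonneg _) hterm
          ((hω2.mul_left _))
      calc |∑' j : ℕ, γ (t + j) θ * X (-(j : ℤ)) ω|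
          ≤ ∑' j : ℕ, |γ (t + j) θ * X (-(j : ℤ)) ω| := by
            have h := norm_tsum_le_tsum_norm (f := fun j : ℕ => γ (t + j) θ * X (-(j : ℤ)) ω)
              (by simpa only [Real.norm_eq_abs] using hsumabs)
            simpa only [Real.norm_eq_abs] using h
        _ ≤ ∑' j : ℕ, K * (t : ℝ) ^ (-(d₁ / 2)) * (((j : ℝ) + 1) ^ (-(1 + d₁ / 2)) * |X (-(j : ℤ)) ω|) :=
            Summable.tsum_le_tsum hterm hsumabs (hω2.mul_left _)
        _ = K * (t : ℝ) ^ (-(d₁ / 2)) * Z := by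
            rw [hZ, tsum_mul_left]
    -- squeeze
    have hup : ∀ t : ℕ, 1 ≤ t →
        (⨆ θ ∈ Θ, |∑' j : ℕ, γ (t + j) θ * X (-(j : ℤ)) ω|) ≤ K * Z * (t : ℝ) ^ (-(d₁ / 2)) := by
      intro t ht
      have htpos : (0:ℝ) < (t : ℝ) := by exact_mod_cast ht
      have hKZ : (0:ℝ) ≤ K * Z * (t : ℝ) ^ (-(d₁ / 2)) := mul_nonneg (mul_nonneg hK.le hZ0) (Real.rpow_nonneg htpos.le _)
      refine Real.iSup_le (fun θ => Real.iSup_le (fun hθ => ?_) hKZ) hKZ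
      have := hbound t ht θ hθ
      calc |∑' j : ℕ, γ (t + j) θ * X (-(j : ℤ)) ω| ≤ K * (t : ℝ) ^ (-(d₁ / 2)) * Z := this
        _ = K * Z * (t : ℝ) ^ (-(d₁ / 2)) := by ring
    have hlo : ∀ t : ℕ, 0 ≤ ⨆ θ ∈ Θ, |∑' j : ℕ, γ (t + j) θ * X (-(j : ℤ)) ω| :=
      fun t => Real.iSup_nonneg fun θ => Real.iSup_nonneg fun _ => abs_nonneg _
    have hg : Tendsto (fun t : ℕ => K * Z * (t : ℝ) ^ (-(d₁ / 2))) atTop (nhds 0) := by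
      have h1 : Tendsto (fun x : ℝ => x ^ (-(d₁ / 2))) atTop (nhds 0) :=
        tendsto_rpow_neg_atTop (by positivity)
      have h2 := (h1.comp tendsto_natCast_atTop_atTop).const_mul (K * Z)
      simpa using h2
    refine squeeze_zero' ?_ ?_ hg
    · exact Eventually.of_forall hlo
    · filter_upwards [eventually_ge_atTop 1] with t ht using hup t ht
end

section
/- Quantitative tail bound for the truncation error (key estimate in the proof of Proposition 4.1): Let (Ω,𝔉,P) be a probability space and (X_t)_{t∈ℤ} real-valued random variables with sup_{t∈ℤ} E|X_t| ≤ C < ∞. Let Θ be a compact subset of ℝ^m, d₁ > 0 and K > 0, and let γ_j : Θ → ℝ (j ≥ 0) satisfy sup_{θ∈Θ} |γ_j(θ)| ≤ K j^{−1−d₁} for all j ≥ 1. Then there exists a constant K' > 0 (depending only on K, C and d₁) such that for every β > 0 and every t ≥ 2, P( sup_{k≥t} sup_{θ∈Θ} |Σ_{j≥0} γ_{k+j}(θ) X_{−j}| > β ) ≤ (K'/(β d₁)) (t−1)^{−d₁}. -/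
open MeasureTheory Filter Topology

/-- Quantitative tail bound for the truncation error: there is a constant `K'` depending only
on `K`, `C` and `d₁` such that for any probability space, any process `(X_t)` with
`sup_t E|X_t| ≤ C`, any compact `Θ ⊂ ℝ^m` and coefficients with
`sup_{θ∈Θ}|γ_j(θ)| ≤ K j^{−1−d₁}` (`j ≥ 1`), one has for all `β > 0`, `t ≥ 2`,
`P(sup_{k≥t} sup_{θ∈Θ} |Σ_{j≥0} γ_{k+j}(θ) X_{−j}| > β) ≤ (K'/(β d₁)) (t−1)^{−d₁}`. -/
theorem truncation_tail_bound (m : ℕ) (d₁ K C : ℝ) (hd₁ : 0 < d₁) (hK : 0 < K) (hC : 0 ≤ C) :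
    ∃ K' > 0,
      ∀ (Ω : Type) (_ : MeasurableSpace Ω) (P : Measure Ω), IsProbabilityMeasure P →
      ∀ X : ℤ → Ω → ℝ, (∀ t : ℤ, Integrable (X t) P) →
        (∀ t : ℤ, ∫ ω, |X t ω| ∂P ≤ C) →
      ∀ Θ : Set (Fin m → ℝ), IsCompact Θ →
      ∀ γ : ℕ → (Fin m → ℝ) → ℝ,
        (∀ j : ℕ, 1 ≤ j → ∀ θ ∈ Θ, |γ j θ| ≤ K * (j : ℝ) ^ (-(1 + d₁))) →
      ∀ β : ℝ, 0 < β → ∀ t : ℕ, 2 ≤ t →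
        (P {ω | ∃ k : ℕ, t ≤ k ∧ ∃ θ ∈ Θ,
            β < |∑' j : ℕ, γ (k + j) θ * X (-(j : ℤ)) ω|}).toReal
          ≤ K' / (β * d₁) * ((t : ℝ) - 1) ^ (-d₁) := by
  refine ⟨K * (C + 1), by positivity, ?_⟩
  intro Ω _ P hP X hXint hXC Θ hΘ γ hγ β hβ t ht
  have ht1 : (1 : ℝ) ≤ (t : ℝ) - 1 := by
    have : (2 : ℝ) ≤ (t : ℝ) := by exact_mod_cast ht
    linarith
  set c : ℕ → ℝ := fun j => ((t : ℝ) + j) ^ (-(1 + d₁)) with hc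
  set f : ℕ → ℝ := fun j => ((t : ℝ) - 1 + j) ^ (-d₁) with hf
  have hapos : ∀ j : ℕ, (0 : ℝ) < (t : ℝ) - 1 + j := fun j => by
    have : (0 : ℝ) ≤ (j : ℕ) := Nat.cast_nonneg j
    linarith
  have hbpos : ∀ j : ℕ, (0 : ℝ) < (t : ℝ) + j := fun j => by
    have := hapos j; linarith
  have hcnonneg : ∀ j, 0 ≤ c j := fun j => Real.rpow_nonneg (hbpos j).le _
  -- key telescoping bound
  have hfc : ∀ j : ℕ, d₁ * c j ≤ f j - f (j + 1) := by
    intro j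
    set a : ℝ := (t : ℝ) - 1 + j with ha
    set b : ℝ := (t : ℝ) + j with hb
    have hab : a ≤ b := by rw [ha, hb]; linarith
    have ha0 : 0 < a := hapos j
    have hb0 : 0 < b := hbpos j
    have h0 : (0 : ℝ) ∉ Set.uIcc a b := by
      rw [Set.uIcc_of_le hab]
      intro h
      exact absurd h.1 (by linarith)
    have hint : ∫ x in a..b, x ^ (-(1 + d₁)) = (b ^ (-d₁) - a ^ (-d₁)) / (-d₁) := by
      rw [integral_rpow (Or.inr ⟨by intro h; nlinarith [hd₁], h0⟩),
        show -(1 + d₁) + 1 = -d₁ by ring]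
    have hmono : ∫ x in a..b, b ^ (-(1 + d₁)) ≤ ∫ x in a..b, x ^ (-(1 + d₁)) := by
      apply intervalIntegral.integral_mono_on hab intervalIntegrable_const
        (intervalIntegral.intervalIntegrable_rpow (Or.inr h0))
      intro x hx
      exact Real.rpow_le_rpow_of_nonpos (lt_of_lt_of_le ha0 hx.1) hx.2 (by linarith)
    have hconst : ∫ x in a..b, b ^ (-(1 + d₁)) = b ^ (-(1 + d₁)) := by
      rw [intervalIntegral.integral_const]
      have : b - a = 1 := by rw [ha, hb]; ring
      rw [this, one_smul]
    have hfj1 : f (j + 1) = b ^ (-d₁) := by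
      simp only [hf, hb]
      push_cast
      ring_nf
    have hfj : f j = a ^ (-d₁) := rfl
    have hcj : c j = b ^ (-(1 + d₁)) := rfl
    rw [hcj, hfj, hfj1]
    have := hmono
    rw [hconst, hint] at this
    have hd : (b ^ (-d₁) - a ^ (-d₁)) / (-d₁) = (a ^ (-d₁) - b ^ (-d₁)) / d₁ := by
      rw [div_neg, ← neg_div, neg_sub]
    rw [hd] at this
    calc d₁ * b ^ (-(1 + d₁)) ≤ d₁ * ((a ^ (-d₁) - b ^ (-d₁)) / d₁) := by
          exact mul_le_mul_of_nonneg_left this hd₁.le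
      _ = a ^ (-d₁) - b ^ (-d₁) := by field_simp
  have hfanti : ∀ j : ℕ, 0 ≤ f j - f (j + 1) := by
    intro j
    have := (hfc j)
    have := mul_nonneg hd₁.le (hcnonneg j)
    linarith
  have hftend : Tendsto f atTop (𝓝 0) := by
    have h1 : Tendsto (fun j : ℕ => (t : ℝ) - 1 + j) atTop atTop :=
      tendsto_atTop_add_const_left _ _ tendsto_natCast_atTop_atTop
    exact (tendsto_rpow_neg_atTop hd₁).comp h1
  have hfs : HasSum (fun j => f j - f (j + 1)) (f 0) := by
    rw [hasSum_iff_tendsto_nat_of_nonneg hfanti]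
    have : ∀ n : ℕ, ∑ i ∈ Finset.range n, (f i - f (i + 1)) = f 0 - f n := fun n =>
      Finset.sum_range_sub' f n
    simp only [this]
    simpa using tendsto_const_nhds.sub hftend
  have hcs : Summable c :=
    Summable.of_nonneg_of_le hcnonneg
      (fun j => (le_div_iff₀' hd₁).mpr (hfc j))
      (hfs.summable.div_const d₁)
  have hSsum : ∑' j, c j ≤ ((t : ℝ) - 1) ^ (-d₁) / d₁ := by
    have h1 : ∑' j, c j ≤ ∑' j, (f j - f (j + 1)) / d₁ := by
      apply Summable.tsum_le_tsum _ hcs (hfs.summable.div_const d₁)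
      intro j
      exact (le_div_iff₀' hd₁).mpr (hfc j)
    have h2 : ∑' j, (f j - f (j + 1)) / d₁ = f 0 / d₁ := (hfs.div_const d₁).tsum_eq
    have h3 : f 0 = ((t : ℝ) - 1) ^ (-d₁) := by simp [hf]
    rw [h2, h3] at h1
    exact h1
  set Z : Ω → ENNReal := fun ω =>
    ∑' j : ℕ, ENNReal.ofReal (K * c j) * ENNReal.ofReal |X (-(j : ℤ)) ω| with hZ
  have hXmeas : ∀ j : ℕ, AEMeasurable (fun ω => ENNReal.ofReal |X (-(j : ℤ)) ω|) P := by
    intro j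
    exact ((hXint _).abs.aestronglyMeasurable.aemeasurable).ennreal_ofReal
  have hZmeas : AEMeasurable Z P := by
    apply AEMeasurable.ennreal_tsum
    intro j
    exact aemeasurable_const.mul (hXmeas j)
  -- event inclusion
  have hsub : {ω | ∃ k : ℕ, t ≤ k ∧ ∃ θ ∈ Θ,
      β < |∑' j : ℕ, γ (k + j) θ * X (-(j : ℤ)) ω|} ⊆ {ω | ENNReal.ofReal β ≤ Z ω} := by
    intro ω hω
    obtain ⟨k, hk, θ, hθ', hβ'⟩ := hω
    have key : ENNReal.ofReal |∑' j : ℕ, γ (k + j) θ * X (-(j : ℤ)) ω| ≤ Z ω := by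
      set g : ℕ → ℝ := fun j => γ (k + j) θ * X (-(j : ℤ)) ω with hg
      have hterm : ∀ j : ℕ,
          ENNReal.ofReal |g j| ≤ ENNReal.ofReal (K * c j) * ENNReal.ofReal |X (-(j : ℤ)) ω| := by
        intro j
        have hkj1 : 1 ≤ k + j := by omega
        have hγbd : |γ (k + j) θ| ≤ K * ((k + j : ℕ) : ℝ) ^ (-(1 + d₁)) := hγ _ hkj1 θ hθ'
        have hmono2 : ((k + j : ℕ) : ℝ) ^ (-(1 + d₁)) ≤ c j := by
          apply Real.rpow_le_rpow_of_nonpos (hbpos j) _ (by linarith)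
          push_cast
          have : (t : ℝ) ≤ (k : ℝ) := by exact_mod_cast hk
          linarith
        have h1 : |g j| ≤ K * c j * |X (-(j : ℤ)) ω| := by
          rw [hg, abs_mul]
          apply mul_le_mul_of_nonneg_right _ (abs_nonneg _)
          exact le_trans hγbd (mul_le_mul_of_nonneg_left hmono2 hK.le)
        calc ENNReal.ofReal |g j| ≤ ENNReal.ofReal (K * c j * |X (-(j : ℤ)) ω|) :=
              ENNReal.ofReal_le_ofReal h1
          _ = ENNReal.ofReal (K * c j) * ENNReal.ofReal |X (-(j : ℤ)) ω| :=
              ENNReal.ofReal_mul (by positivity)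
      by_cases hsum : Summable fun j => |g j|
      · have hgs : Summable g := summable_abs_iff.mp hsum
        have h1 : |∑' j, g j| ≤ ∑' j, |g j| := by
          have h0 : Summable fun j => ‖g j‖ := by simpa [Real.norm_eq_abs] using hsum
          simpa [Real.norm_eq_abs] using norm_tsum_le_tsum_norm h0
        calc ENNReal.ofReal |∑' j, g j| ≤ ENNReal.ofReal (∑' j, |g j|) :=
              ENNReal.ofReal_le_ofReal h1
          _ = ∑' j, ENNReal.ofReal |g j| :=
              ENNReal.ofReal_tsum_of_nonneg (fun j => abs_nonneg _) hsum
          _ ≤ Z ω := ENNReal.tsum_le_tsum hterm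
      · have : ¬ Summable g := fun h => hsum h.abs
        rw [tsum_eq_zero_of_not_summable this]
        simp
    exact le_trans (ENNReal.ofReal_le_ofReal hβ'.le) key
  -- Markov
  have hmarkov : P {ω | ENNReal.ofReal β ≤ Z ω} ≤ (∫⁻ ω, Z ω ∂P) / ENNReal.ofReal β :=
    meas_ge_le_lintegral_div hZmeas ((ENNReal.ofReal_pos.mpr hβ).ne') ENNReal.ofReal_ne_top
  -- compute the lintegral
  have hlint : ∫⁻ ω, Z ω ∂P ≤ ENNReal.ofReal (K * (∑' j, c j) * C) := by
    have h1 : ∫⁻ ω, Z ω ∂P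
        = ∑' j : ℕ, ∫⁻ ω, ENNReal.ofReal (K * c j) * ENNReal.ofReal |X (-(j : ℤ)) ω| ∂P :=
      lintegral_tsum fun j => aemeasurable_const.mul (hXmeas j)
    have h2 : ∀ j : ℕ, ∫⁻ ω, ENNReal.ofReal (K * c j) * ENNReal.ofReal |X (-(j : ℤ)) ω| ∂P
        ≤ ENNReal.ofReal (K * c j) * ENNReal.ofReal C := by
      intro j
      rw [lintegral_const_mul'' _ (hXmeas j)]
      apply mul_le_mul_right _ _
      rw [← ofReal_integral_eq_lintegral_ofReal (hXint _).abs (ae_of_all _ fun ω => abs_nonneg _)]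
      exact ENNReal.ofReal_le_ofReal (hXC _)
    calc ∫⁻ ω, Z ω ∂P
        ≤ ∑' j : ℕ, ENNReal.ofReal (K * c j) * ENNReal.ofReal C := by
          rw [h1]; exact ENNReal.tsum_le_tsum h2
      _ = (∑' j : ℕ, ENNReal.ofReal (K * c j)) * ENNReal.ofReal C := ENNReal.tsum_mul_right
      _ = ENNReal.ofReal (∑' j : ℕ, K * c j) * ENNReal.ofReal C := by
          rw [ENNReal.ofReal_tsum_of_nonneg (fun j => mul_nonneg hK.le (hcnonneg j)) (hcs.mul_left K)]
      _ = ENNReal.ofReal (K * (∑' j, c j) * C) := by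
          rw [← ENNReal.ofReal_mul (by rw [tsum_mul_left]; exact mul_nonneg hK.le (tsum_nonneg hcnonneg))]
          congr 1
          rw [tsum_mul_left]
    -- done
  -- final chain
  have hfinal : P {ω | ∃ k : ℕ, t ≤ k ∧ ∃ θ ∈ Θ,
      β < |∑' j : ℕ, γ (k + j) θ * X (-(j : ℤ)) ω|}
      ≤ ENNReal.ofReal (K * (∑' j, c j) * C) / ENNReal.ofReal β := by
    calc P _ ≤ P {ω | ENNReal.ofReal β ≤ Z ω} := measure_mono hsub
      _ ≤ (∫⁻ ω, Z ω ∂P) / ENNReal.ofReal β := hmarkov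
      _ ≤ ENNReal.ofReal (K * (∑' j, c j) * C) / ENNReal.ofReal β :=
          ENNReal.div_le_div_right hlint _
  have hne : ENNReal.ofReal (K * (∑' j, c j) * C) / ENNReal.ofReal β ≠ ⊤ := by
    apply (ENNReal.div_lt_top ENNReal.ofReal_ne_top ((ENNReal.ofReal_pos.mpr hβ).ne')).ne
  have htr := ENNReal.toReal_mono hne hfinal
  refine le_trans htr ?_
  rw [ENNReal.toReal_div,
    ENNReal.toReal_ofReal (mul_nonneg (mul_nonneg hK.le (tsum_nonneg hcnonneg)) hC),
    ENNReal.toReal_ofReal hβ.le]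
  have hScnn : 0 ≤ ∑' j, c j := tsum_nonneg hcnonneg
  rw [show K * (C + 1) / (β * d₁) * ((t : ℝ) - 1) ^ (-d₁)
      = K * (((t : ℝ) - 1) ^ (-d₁) / d₁) * (C + 1) / β by field_simp]
  gcongr
  · linarith
end

section
/- Almost-sure uniform negligibility of the truncation for the derivative coefficients (Remark 4.1): Let (Ω,𝔉,P) be a probability space and (X_t)_{t∈ℤ} real-valued random variables with sup_{t∈ℤ} E|X_t| < ∞. Let Θ be a compact subset of ℝ^m, d₁ > 0 and K > 0, and let c_j : Θ → ℝ (j ≥ 0) satisfy sup_{θ∈Θ} |c_j(θ)| ≤ K j^{−1−d₁} (log j)² for all j ≥ 2. Then, almost surely, sup_{θ∈Θ} |Σ_{j≥t} c_j(θ) X_{t−j}| converges to 0 as t → ∞. (Applied with c_j = ∂γ_j/∂θ_i, whose decay is O(j^{−1−d₁} log j), and with c_j = ∂²γ_j/∂θ_i∂θ_j, whose decay is O(j^{−1−d₁}(log j)²), this gives that sup_{θ∈Θ} |∂ε_t(θ)/∂θ_i − ∂ε̃_t(θ)/∂θ_i| → 0 and sup_{θ∈Θ} |∂²ε_t(θ)/∂θ_i∂θ_j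 − ∂²ε̃_t(θ)/∂θ_i∂θ_j| → 0 almost surely.) -/
open MeasureTheory ProbabilityTheory Filter Real

/-- Almost-sure uniform negligibility of the truncation for the derivative coefficients:
if `sup_t E|X_t| < ∞`, `Θ ⊂ ℝ^m` is compact and
`sup_{θ∈Θ} |c_j(θ)| ≤ K j^{−1−d₁} (log j)²` for `j ≥ 2`, then almost surely
`sup_{θ∈Θ} |Σ_{j≥t} c_j(θ) X_{t−j}| = sup_{θ∈Θ} |Σ_{j≥0} c_{t+j}(θ) X_{−j}| → 0`
as `t → ∞`. -/
theorem truncation_negligible_derivative_coeffs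
    {Ω : Type*} [MeasureSpace Ω] [IsProbabilityMeasure (ℙ : Measure Ω)]
    {m : ℕ} (Θ : Set (Fin m → ℝ)) (hΘ : IsCompact Θ)
    (X : ℤ → Ω → ℝ) (hXint : ∀ t : ℤ, Integrable (X t) ℙ)
    (C : ℝ) (hXC : ∀ t : ℤ, ∫ ω, |X t ω| ∂ℙ ≤ C)
    (c : ℕ → (Fin m → ℝ) → ℝ) (d₁ K : ℝ) (hd₁ : 0 < d₁) (hK : 0 < K)
    (hc : ∀ j : ℕ, 2 ≤ j → ∀ θ ∈ Θ,
      |c j θ| ≤ K * (j : ℝ) ^ (-(1 + d₁)) * (Real.log j) ^ 2) :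
    ∀ᵐ ω ∂ℙ,
      Tendsto (fun t : ℕ => ⨆ θ ∈ Θ, |∑' j : ℕ, c (t + j) θ * X (-(j : ℤ)) ω|)
        atTop (nhds 0) := by
  set p : ℝ := 1 + d₁ / 2 with hp
  have hppos : 0 < p := by positivity
  have hp1 : (-1 : ℝ) > -p := by simp only [hp, gt_iff_lt, neg_lt_neg_iff]; linarith
  set K' : ℝ := K * (4 / d₁) ^ 2 with hK'
  have hK'pos : 0 < K' := by positivity
  have hC0 : 0 ≤ C := le_trans (integral_nonneg fun ω => abs_nonneg _) (hXC 0)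
  -- key coefficient bound
  have hkey : ∀ n : ℕ, 2 ≤ n → ∀ θ ∈ Θ, |c n θ| ≤ K' * (n : ℝ) ^ (-p) := by
    intro n hn θ hθ
    have hn0 : (0 : ℝ) < n := by
      have : (2 : ℝ) ≤ n := by exact_mod_cast hn
      linarith
    have hlog : Real.log n ≤ (4 / d₁) * (n : ℝ) ^ (d₁ / 4) := by
      have h := Real.log_natCast_le_rpow_div n (by positivity : (0:ℝ) < d₁ / 4)
      calc Real.log n ≤ (n : ℝ) ^ (d₁ / 4) / (d₁ / 4) := h
        _ = (4 / d₁) * (n : ℝ) ^ (d₁ / 4) := by field_simp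
    have hlog0 : 0 ≤ Real.log n := Real.log_nonneg (by exact_mod_cast Nat.one_le_of_lt hn)
    have hsq : (Real.log n) ^ 2 ≤ (4 / d₁) ^ 2 * (n : ℝ) ^ (d₁ / 2) := by
      have h2 : ((4 / d₁) * (n : ℝ) ^ (d₁ / 4)) ^ 2 = (4 / d₁) ^ 2 * (n : ℝ) ^ (d₁ / 2) := by
        rw [mul_pow]
        congr 1
        rw [sq, ← Real.rpow_add hn0]
        congr 1
        ring
      calc (Real.log n) ^ 2 ≤ ((4 / d₁) * (n : ℝ) ^ (d₁ / 4)) ^ 2 :=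
            pow_le_pow_left₀ hlog0 hlog 2
        _ = _ := h2
    have hexp : (n : ℝ) ^ (-(1 + d₁)) * (n : ℝ) ^ (d₁ / 2) = (n : ℝ) ^ (-p) := by
      rw [← Real.rpow_add hn0]
      congr 1
      rw [hp]; ring
    calc |c n θ| ≤ K * (n : ℝ) ^ (-(1 + d₁)) * (Real.log n) ^ 2 := hc n hn θ hθ
      _ ≤ K * (n : ℝ) ^ (-(1 + d₁)) * ((4 / d₁) ^ 2 * (n : ℝ) ^ (d₁ / 2)) := by
          apply mul_le_mul_of_nonneg_left hsq (by positivity)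
      _ = K' * (n : ℝ) ^ (-p) := by rw [hK', ← hexp]; ring
  -- dominating sequence
  set D : ℕ → ℝ := fun j => K' * ((j : ℝ) + 2) ^ (-p) with hD
  have hDpos : ∀ j, 0 ≤ D j := fun j => by
    have : (0:ℝ) ≤ ((j : ℝ) + 2) ^ (-p) := Real.rpow_nonneg (by positivity) _
    positivity
  have hDsum : Summable D := by
    have hs : Summable (fun n : ℕ => (n : ℝ) ^ (-p)) :=
      Real.summable_nat_rpow.2 (by linarith)
    have hs2 : Summable (fun j : ℕ => ((j : ℝ) + 2) ^ (-p)) := by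
      have h := (summable_nat_add_iff (f := fun n : ℕ => (n : ℝ) ^ (-p)) 2).2 hs
      convert h using 2 with j
      push_cast
      rfl
      push_cast
      ring_nf
    exact hs2.mul_left K'
  set g : ℕ → Ω → ℝ := fun j ω => D j * |X (-(j : ℤ)) ω| with hg
  have hgint : ∀ j, Integrable (g j) ℙ := fun j => ((hXint _).abs).const_mul (D j)
  have hgnn : ∀ j ω, 0 ≤ g j ω := fun j ω => mul_nonneg (hDpos j) (abs_nonneg _)
  have hlint : ∀ j, ∫⁻ ω, ‖g j ω‖₊ ∂ℙ ≤ ENNReal.ofReal (D j * C) := by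
    intro j
    have hnn : 0 ≤ᵐ[ℙ] g j := Eventually.of_forall (hgnn j)
    have h1 : ∫⁻ ω, (‖g j ω‖₊ : ENNReal) ∂ℙ = ∫⁻ ω, ENNReal.ofReal (g j ω) ∂ℙ :=
      lintegral_congr fun ω => Real.enorm_eq_ofReal (hgnn j ω)
    rw [h1, ← ofReal_integral_eq_lintegral_ofReal (hgint j) hnn]
    apply ENNReal.ofReal_le_ofReal
    rw [hg]
    simp only
    rw [integral_const_mul]
    exact mul_le_mul_of_nonneg_left (hXC _) (hDpos j)
  have hmeas : ∀ j, AEMeasurable (fun ω => (‖g j ω‖₊ : ENNReal)) ℙ :=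
    fun j => (hgint j).1.enorm
  have htop : ∑' j, ∫⁻ ω, ‖g j ω‖₊ ∂ℙ ≠ ⊤ := by
    refine ne_top_of_le_ne_top ?_ (ENNReal.tsum_le_tsum hlint)
    rw [← ENNReal.ofReal_tsum_of_nonneg (fun j => mul_nonneg (hDpos j) hC0)
      (hDsum.mul_right C)]
    exact ENNReal.ofReal_ne_top
  have hae : ∀ᵐ ω ∂ℙ, Summable (fun j => g j ω) := by
    rw [← lintegral_tsum hmeas] at htop
    filter_upwards [ae_lt_top' (AEMeasurable.ennreal_tsum hmeas) htop] with ω hω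
    have h2 : Summable (fun j => ((‖g j ω‖₊ : NNReal) : ℝ)) :=
      ENNReal.tsum_coe_ne_top_iff_summable_coe.1 hω.ne
    simp only [coe_nnnorm] at h2
    exact h2.of_norm
  filter_upwards [hae] with ω hω
  -- pointwise dominated convergence of the majorant series
  set f : ℕ → ℕ → ℝ := fun t j => K' * ((t : ℝ) + (j : ℝ)) ^ (-p) * |X (-(j : ℤ)) ω|
    with hf
  have hfnn : ∀ t j, 0 ≤ f t j := fun t j => by
    have : (0:ℝ) ≤ ((t : ℝ) + (j : ℝ)) ^ (-p) := Real.rpow_nonneg (by positivity) _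
    positivity
  have hfbound : ∀ t : ℕ, 2 ≤ t → ∀ j, f t j ≤ g j ω := by
    intro t ht j
    have h2 : ((t : ℝ) + (j : ℝ)) ^ (-p) ≤ ((j : ℝ) + 2) ^ (-p) := by
      apply Real.rpow_le_rpow_of_nonpos (by positivity)
      · have : (2 : ℝ) ≤ (t : ℝ) := by exact_mod_cast ht
        linarith
      · linarith
    exact mul_le_mul_of_nonneg_right (mul_le_mul_of_nonneg_left h2 hK'pos.le)
      (abs_nonneg _)
  have hMtendsto : Tendsto (fun t : ℕ => ∑' j, f t j) atTop (nhds 0) := by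
    have h0 : Tendsto (fun t : ℕ => ∑' j, f t j) atTop (nhds (∑' _ : ℕ, (0 : ℝ))) := by
      apply tendsto_tsum_of_dominated_convergence (bound := fun j => g j ω) hω
      · intro j
        have h1 : Tendsto (fun t : ℕ => (t : ℝ) + (j : ℝ)) atTop atTop :=
          tendsto_atTop_add_const_right atTop _ tendsto_natCast_atTop_atTop
        have h2 : Tendsto (fun t : ℕ => ((t : ℝ) + (j : ℝ)) ^ (-p)) atTop (nhds 0) :=
          (tendsto_rpow_neg_atTop hppos).comp h1
        have h3 := (h2.const_mul K').mul_const |X (-(j : ℤ)) ω|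
        simpa using h3
      · filter_upwards [eventually_ge_atTop 2] with t ht j
        rw [Real.norm_eq_abs, abs_of_nonneg (hfnn t j)]
        exact hfbound t ht j
    simpa using h0
  -- squeeze
  apply squeeze_zero' (Eventually.of_forall fun t =>
    Real.iSup_nonneg fun θ => Real.iSup_nonneg fun _ => abs_nonneg _) ?_ hMtendsto
  filter_upwards [eventually_ge_atTop 2] with t ht
  have hMnn : 0 ≤ ∑' j, f t j := tsum_nonneg (hfnn t)
  have hfsum : Summable (f t) := hω.of_nonneg_of_le (hfnn t) (hfbound t ht)
  apply Real.iSup_le _ hMnn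
  intro θ
  apply Real.iSup_le _ hMnn
  intro hθ
  have hterm : ∀ j, |c (t + j) θ * X (-(j : ℤ)) ω| ≤ f t j := by
    intro j
    rw [abs_mul]
    have h1 : |c (t + j) θ| ≤ K' * ((t + j : ℕ) : ℝ) ^ (-p) :=
      hkey (t + j) (le_trans ht (Nat.le_add_right t j)) θ hθ
    have h2 : ((t + j : ℕ) : ℝ) = (t : ℝ) + (j : ℝ) := by push_cast; ring
    rw [h2] at h1
    exact mul_le_mul_of_nonneg_right h1 (abs_nonneg _)
  have hsumabs : Summable (fun j => |c (t + j) θ * X (-(j : ℤ)) ω|) :=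
    hfsum.of_nonneg_of_le (fun j => abs_nonneg _) hterm
  have hsumabs' : Summable (fun j : ℕ => ‖c (t + j) θ * X (-(j : ℤ)) ω‖) := by
    simpa only [Real.norm_eq_abs] using hsumabs
  have habs := norm_tsum_le_tsum_norm hsumabs'
  simp only [Real.norm_eq_abs] at habs
  exact le_trans habs (Summable.tsum_le_tsum hterm hsumabs hfsum)
end
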